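/- The function h defined by h(k) = Γ(k+1/2)/Γ(k) for k ≥ 1 and h(k) = 0 for k ≤ 0 is non-decreasing on ℤ, sub-additive (h(x+y) ≤ h(x) + h(y) for all x, y ∈ ℤ), and satisfies h(k) ~ √k as k → ∞, i.e. lim_{k→∞} h(k)/√k = 1. -/

import Mathlib

open Filter

noncomputable def hFun : ℤ → ℝ := fun k =>
  if 1 ≤ k then Real.Gamma ((k : ℝ) + 1 / 2) / Real.Gamma (k : ℝ) else 0

/-!
Log-convexity of `Γ` on the points `s, s + 1/2, s + 1` gives `Γ(s + 1/2)² ≤ s Γ(s)²`; applied once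
more at `s + 1/2` it shows that `r(s) = Γ(s + 1/2)/Γ(s)` satisfies `s - 1/2 ≤ r(s)² ≤ s` for `s > 0`.
The upper bound yields `r(s + t) ≤ √(s + t)`, while for `s, t ≥ 1` the lower bound makes
`r(s)² + r(t)² ≥ s + t - 1` and `r(s) r(t) ≥ 1/2`, so `(r(s) + r(t))² ≥ s + t`. The same sandwich
gives `r(s)/√s → 1`, and monotonicity comes from `r(s + 1) = (s + 1/2)/s · r(s)`.
-/

open Real Topology

theorem Real.Gamma_add_half_sq_le {s : ℝ} (hs : 0 < s) :
    Gamma (s + 1 / 2) ^ 2 ≤ s * Gamma s ^ 2 := by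
  have hconv := Gamma_mul_add_mul_le_rpow_Gamma_mul_rpow_Gamma hs (by linarith : 0 < s + 1)
    (by norm_num : (0 : ℝ) < 1 / 2) (by norm_num : (0 : ℝ) < 1 / 2) (by norm_num)
  have hmid : 1 / 2 * s + 1 / 2 * (s + 1) = s + 1 / 2 := by ring
  rw [hmid, ← mul_rpow (Gamma_pos_of_pos hs).le (Gamma_pos_of_pos (by linarith)).le,
    ← sqrt_eq_rpow, Gamma_add_one hs.ne'] at hconv
  calc Gamma (s + 1 / 2) ^ 2 ≤ √(Gamma s * (s * Gamma s)) ^ 2 :=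
        pow_le_pow_left₀ (Gamma_pos_of_pos (by linarith)).le hconv 2
    _ = s * Gamma s ^ 2 := by
        rw [sq_sqrt (by have := Gamma_pos_of_pos hs; positivity)]; ring

noncomputable def gammaHalfRatio (s : ℝ) : ℝ := Gamma (s + 1 / 2) / Gamma s

section gammaHalfRatio

variable {s t : ℝ}

theorem gammaHalfRatio_pos (hs : 0 < s) : 0 < gammaHalfRatio s :=
  div_pos (Gamma_pos_of_pos (by linarith)) (Gamma_pos_of_pos hs)

theorem gammaHalfRatio_sq_le (hs : 0 < s) : gammaHalfRatio s ^ 2 ≤ s := by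
  rw [gammaHalfRatio, div_pow, div_le_iff₀ (by have := Gamma_pos_of_pos hs; positivity)]
  exact Gamma_add_half_sq_le hs

theorem sub_half_le_gammaHalfRatio_sq (hs : 0 < s) : s - 1 / 2 ≤ gammaHalfRatio s ^ 2 := by
  have hΓ := Gamma_pos_of_pos hs
  have h := Gamma_add_half_sq_le (by linarith : 0 < s + 1 / 2)
  rw [add_assoc, add_halves, Gamma_add_one hs.ne'] at h
  rw [gammaHalfRatio, div_pow, le_div_iff₀ (by positivity)]
  nlinarith [sq_nonneg (Gamma s)]

theorem gammaHalfRatio_add_one (hs : 0 < s) :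
    gammaHalfRatio (s + 1) = (s + 1 / 2) / s * gammaHalfRatio s := by
  rw [gammaHalfRatio, gammaHalfRatio, add_right_comm, Gamma_add_one (by linarith),
    Gamma_add_one hs.ne']
  have := (Gamma_pos_of_pos hs).ne'
  field_simp

theorem gammaHalfRatio_le_add_one (hs : 0 < s) : gammaHalfRatio s ≤ gammaHalfRatio (s + 1) := by
  rw [gammaHalfRatio_add_one hs]
  exact le_mul_of_one_le_left (gammaHalfRatio_pos hs).le
    ((one_le_div hs).2 (by linarith))

theorem gammaHalfRatio_add_le (hs : 1 ≤ s) (ht : 1 ≤ t) :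
    gammaHalfRatio (s + t) ≤ gammaHalfRatio s + gammaHalfRatio t := by
  set a := gammaHalfRatio s
  set b := gammaHalfRatio t
  have ha := sub_half_le_gammaHalfRatio_sq (by linarith : 0 < s)
  have hb := sub_half_le_gammaHalfRatio_sq (by linarith : 0 < t)
  have ha_pos : 0 < a := gammaHalfRatio_pos (by linarith)
  have hb_pos : 0 < b := gammaHalfRatio_pos (by linarith)
  have hab : 1 / 2 ≤ a * b := by nlinarith
  have hsum : s + t ≤ (a + b) ^ 2 := by nlinarith
  calc gammaHalfRatio (s + t) ≤ √(s + t) :=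
        le_sqrt_of_sq_le (gammaHalfRatio_sq_le (by linarith))
    _ ≤ a + b := sqrt_le_iff.2 ⟨by positivity, hsum⟩

end gammaHalfRatio

theorem tendsto_gammaHalfRatio_sq_div_self :
    Tendsto (fun s => gammaHalfRatio s ^ 2 / s) atTop (𝓝 1) := by
  have hlower : Tendsto (fun s : ℝ => 1 - 1 / 2 * s⁻¹) atTop (𝓝 1) := by
    simpa using tendsto_const_nhds.sub (tendsto_inv_atTop_zero.const_mul (1 / 2 : ℝ))
  refine tendsto_of_tendsto_of_tendsto_of_le_of_le' hlower tendsto_const_nhds ?_ ?_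
  all_goals filter_upwards [eventually_gt_atTop 0] with s hs
  · rw [le_div_iff₀ hs]
    have := sub_half_le_gammaHalfRatio_sq hs
    field_simp
    linarith
  · exact (div_le_one hs).2 (gammaHalfRatio_sq_le hs)

theorem tendsto_gammaHalfRatio_div_sqrt :
    Tendsto (fun s => gammaHalfRatio s / √s) atTop (𝓝 1) := by
  have h := tendsto_gammaHalfRatio_sq_div_self.sqrt
  rw [sqrt_one] at h
  refine h.congr' ?_
  filter_upwards [eventually_gt_atTop 0] with s hs
  rw [sqrt_div' _ hs.le, sqrt_sq (gammaHalfRatio_pos hs).le]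

theorem hFun_of_one_le {k : ℤ} (hk : 1 ≤ k) : hFun k = gammaHalfRatio k := if_pos hk

theorem hFun_of_lt_one {k : ℤ} (hk : k < 1) : hFun k = 0 := if_neg (not_le.2 hk)

theorem hFun_nonneg (k : ℤ) : 0 ≤ hFun k := by
  rcases lt_or_ge k 1 with hk | hk
  · rw [hFun_of_lt_one hk]
  · rw [hFun_of_one_le hk]
    exact (gammaHalfRatio_pos (by exact_mod_cast hk)).le

theorem hFun_monotone : Monotone hFun := by
  refine monotone_int_of_le_succ fun k => ?_
  rcases lt_or_ge k 1 with hk | hk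
  · rw [hFun_of_lt_one hk]
    exact hFun_nonneg _
  · rw [hFun_of_one_le hk, hFun_of_one_le (by omega), Int.cast_add, Int.cast_one]
    exact gammaHalfRatio_le_add_one (by exact_mod_cast hk)

theorem hFun_add_le (x y : ℤ) : hFun (x + y) ≤ hFun x + hFun y := by
  rcases lt_or_ge x 1 with hx | hx
  · rw [hFun_of_lt_one hx, zero_add]
    exact hFun_monotone (by omega)
  rcases lt_or_ge y 1 with hy | hy
  · rw [hFun_of_lt_one hy, add_zero]
    exact hFun_monotone (by omega)
  rw [hFun_of_one_le hx, hFun_of_one_le hy, hFun_of_one_le (by omega), Int.cast_add]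
  exact gammaHalfRatio_add_le (by exact_mod_cast hx) (by exact_mod_cast hy)

theorem tendsto_hFun_div_sqrt :
    Tendsto (fun k : ℕ => hFun (k : ℤ) / √(k : ℝ)) atTop (𝓝 1) := by
  refine (tendsto_gammaHalfRatio_div_sqrt.comp tendsto_natCast_atTop_atTop).congr' ?_
  filter_upwards [eventually_ge_atTop 1] with k hk
  rw [Function.comp_apply, hFun_of_one_le (by exact_mod_cast hk), Int.cast_natCast]

/-- `h` is non-decreasing on `ℤ`, sub-additive, and `h(k) ~ √k` as `k → ∞`. -/
theorem hFun_monotone_subadditive_asymptotic :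
    Monotone hFun ∧
    (∀ x y : ℤ, hFun (x + y) ≤ hFun x + hFun y) ∧
    Tendsto (fun k : ℕ => hFun (k : ℤ) / Real.sqrt (k : ℝ)) atTop (nhds 1) :=
  ⟨hFun_monotone, hFun_add_le, tendsto_hFun_div_sqrt⟩
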